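/- Let c₁ > 0, b < 0, a, d ∈ ℝ, and set α² = √(−b/c₁). For s > 0 let M(s) be the 2×2 real matrix with rows (1 + a·s², −c₁·s) and (b·s, 1 + d·s²). Then for all sufficiently small s > 0, M(s) has two distinct real eigenvalues λ₋(s) < λ₊(s) with eigenvectors (1, m₋(s)) and (1, m₊(s)), and as s → 0⁺: λ±(s) = 1 ± α²c₁·s + ((a + d)/2)·s² + O(s³), m₋(s) = α² + ((a − d)/(2c₁))·s + O(s²), and m₊(s) = −α² + ((a − d)/(2c₁))·s + O(s²). -/

import Mathlib

open Real Matrix Filter Topology Asymptotics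

/-
The characteristic polynomial of `M(s)` has discriminant `s² R(s)²` with
`R(s) = √(-b c₁ + ((a - d)/2)² s²)`, so the eigenvalues are exactly `1 + ((a + d)/2) s² ∓ s R(s)`,
with eigenvector slopes `((a - d)/2 · s ± R(s)) / c₁`. As `R(0) = √(-b c₁) = α² c₁` and
`R(s) - R(0) = O(s²)`, all four expansions follow.
-/

theorem Matrix.mulVec_one_slope_eq_smul_iff {p q r t l m : ℝ} :
    !![p, q; r, t] *ᵥ ![1, m] = l • ![1, m] ↔ p + q * m = l ∧ r + t * m = l * m := by
  simp [funext_iff, Fin.forall_fin_two, mul_comm q, mul_comm t]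

theorem Real.sqrt_add_sub_sqrt_le {p q : ℝ} (hp : 0 < p) (hq : 0 ≤ q) :
    √(p + q) - √p ≤ q / √p := by
  have hsp : 0 < √p := sqrt_pos.mpr hp
  have hle : √p ≤ √(p + q) := sqrt_le_sqrt (by linarith)
  rw [le_div_iff₀ hsp]
  nlinarith [sq_sqrt hp.le, sq_sqrt (by linarith : 0 ≤ p + q)]

theorem Real.isBigO_sqrt_add_sq_sub_sqrt {α : Type*} {l : Filter α} {p : ℝ} (hp : 0 < p)
    (k : ℝ) (f : α → ℝ) : (fun x => √(p + k ^ 2 * f x ^ 2) - √p) =O[l] fun x => f x ^ 2 := by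
  refine IsBigO.of_bound (k ^ 2 / √p) (Eventually.of_forall fun x => ?_)
  have hq : 0 ≤ k ^ 2 * f x ^ 2 := by positivity
  have hle : √p ≤ √(p + k ^ 2 * f x ^ 2) := sqrt_le_sqrt (by linarith)
  rw [norm_of_nonneg (sub_nonneg.mpr hle), norm_of_nonneg (by positivity), div_mul_eq_mul_div]
  exact sqrt_add_sub_sqrt_le hp hq

-- Taking `r = ±R(s)` yields both eigenpairs.
theorem jacobian_eigenpair {c₁ b a d s r : ℝ} (hc₁ : c₁ ≠ 0)
    (hr : r ^ 2 = -b * c₁ + ((a - d) / 2) ^ 2 * s ^ 2) :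
    !![1 + a * s ^ 2, -c₁ * s; b * s, 1 + d * s ^ 2] *ᵥ ![1, ((a - d) / 2 * s + r) / c₁] =
      (1 + (a + d) / 2 * s ^ 2 - s * r) • ![1, ((a - d) / 2 * s + r) / c₁] := by
  rw [mulVec_one_slope_eq_smul_iff]
  constructor
  · field_simp; ring
  · field_simp; linear_combination (4 * s) * hr

/-- Eigenvalue and eigenvector-slope expansion (4.4) for the Jacobian
`M(s) = [[1 + a s², −c₁ s], [b s, 1 + d s²]]` with `c₁ > 0`, `b < 0`:
for small `s > 0`, `M(s)` has two distinct real eigenvalues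
`λ±(s) = 1 ± α²c₁ s + ((a+d)/2) s² + O(s³)`, with eigenvectors of slopes
`m∓(s) = ±α² + ((a−d)/(2c₁)) s + O(s²)`, where `α² = √(−b/c₁)`. -/
theorem stmt_13 (c₁ b a d : ℝ) (hc₁ : 0 < c₁) (hb : b < 0)
    (M : ℝ → Matrix (Fin 2) (Fin 2) ℝ)
    (hM : ∀ s : ℝ, M s = !![1 + a * s ^ 2, -c₁ * s; b * s, 1 + d * s ^ 2]) :
    ∃ s₀ > (0 : ℝ), ∃ lamm lamp mm mp : ℝ → ℝ,
      (∀ s ∈ Set.Ioo (0 : ℝ) s₀,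
        lamm s < lamp s ∧
        (M s).mulVec ![1, mm s] = lamm s • ![1, mm s] ∧
        (M s).mulVec ![1, mp s] = lamp s • ![1, mp s]) ∧
      (fun s => lamm s -
          (1 - Real.sqrt (-b / c₁) * c₁ * s + (a + d) / 2 * s ^ 2))
        =O[𝓝[>] (0 : ℝ)] (fun s => s ^ 3) ∧
      (fun s => lamp s -
          (1 + Real.sqrt (-b / c₁) * c₁ * s + (a + d) / 2 * s ^ 2))
        =O[𝓝[>] (0 : ℝ)] (fun s => s ^ 3) ∧
      (fun s => mm s - (Real.sqrt (-b / c₁) + (a - d) / (2 * c₁) * s))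
        =O[𝓝[>] (0 : ℝ)] (fun s => s ^ 2) ∧
      (fun s => mp s - (-Real.sqrt (-b / c₁) + (a - d) / (2 * c₁) * s))
        =O[𝓝[>] (0 : ℝ)] (fun s => s ^ 2) := by
  have hbc : 0 < -b * c₁ := mul_pos (neg_pos.mpr hb) hc₁
  set R : ℝ → ℝ := fun s => √(-b * c₁ + ((a - d) / 2) ^ 2 * s ^ 2)
  have hR : ∀ s, R s ^ 2 = -b * c₁ + ((a - d) / 2) ^ 2 * s ^ 2 := fun s =>
    sq_sqrt (by positivity)
  have hRneg : ∀ s, (-R s) ^ 2 = -b * c₁ + ((a - d) / 2) ^ 2 * s ^ 2 := fun s => by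
    rw [neg_sq, hR]
  have hRpos : ∀ s, 0 < R s := fun s => sqrt_pos.mpr (by positivity)
  have hα : √(-b / c₁) * c₁ = √(-b * c₁) := by
    rw [show -b * c₁ = -b / c₁ * c₁ ^ 2 by field_simp,
      sqrt_mul (div_nonneg (by linarith) hc₁.le), sqrt_sq hc₁.le]
  have hO : (fun s => R s - √(-b * c₁)) =O[𝓝[>] 0] fun s => s ^ 2 :=
    isBigO_sqrt_add_sq_sub_sqrt hbc _ id
  have hO3 : (fun s => s * (R s - √(-b * c₁))) =O[𝓝[>] 0] fun s => s ^ 3 :=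
    ((isBigO_refl id _).mul hO).congr_right fun s => by simp only [id]; ring
  have hOslope : (fun s => c₁⁻¹ * (R s - √(-b * c₁))) =O[𝓝[>] 0] fun s => s ^ 2 :=
    hO.const_mul_left _
  refine ⟨1, one_pos,
    fun s => 1 + (a + d) / 2 * s ^ 2 - s * R s,
    fun s => 1 + (a + d) / 2 * s ^ 2 - s * -R s,
    fun s => ((a - d) / 2 * s + R s) / c₁,
    fun s => ((a - d) / 2 * s + -R s) / c₁,
    fun s hs => ⟨?_, ?_, ?_⟩, ?_, ?_, ?_, ?_⟩
  · nlinarith [hRpos s, hs.1]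
  · rw [hM]; exact jacobian_eigenpair hc₁.ne' (hR s)
  · rw [hM]; exact jacobian_eigenpair hc₁.ne' (hRneg s)
  · refine hO3.neg_left.congr_left fun s => ?_
    rw [hα]; ring
  · refine hO3.congr_left fun s => ?_
    rw [hα]; ring
  · refine hOslope.congr_left fun s => ?_
    rw [← hα]; field_simp; ring
  · refine hOslope.neg_left.congr_left fun s => ?_
    rw [← hα]; field_simp; ring
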